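/- arXiv:1810.01947 — 3 statements merged into one kernel-verified Lean document; each statement's English description precedes it below -/
import Mathlib

section
/- (Finite Products Theorem) Let (X, ·) be an infinite semigroup which is either idempotent-free or weakly left cancellative. Then for every finite coloring of X there exist a color class A and an injective infinite sequence x₀, x₁, … in X such that every finite product x_{i₀}·…·x_{iₙ} with i₀ < … < iₙ belongs to A. -/
/-- The product `a * b₁ * ⋯ * bₖ` of a nonempty list of semigroup elements. -/
def listProd {X : Type} [Mul X] : X → List X → X
  | a, [] => a
  | a, b :: l => listProd (a * b) l

/-!
An idempotent ultrafilter `U` on `X` that contains no finite set exists: in the idempotent-free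
case every idempotent of the compact right-topological semigroup `βX` is non-principal, and in the
weakly left cancellative case the non-principal ultrafilters form a closed subsemigroup of `βX`.
Take the colour class `A ∈ U`. Since `A ∈ U * U`, some `a ∈ A` has `a⁻¹A ∈ U`; so we can pick
`x₀ = a` and continue inside `(A ∩ a⁻¹A) \ {a} ∈ U`. The sets `Bₙ` of this Galvin–Glazer
recursion decrease and every product starting with `xₙ` lies in `Bₙ`, while removing `xₙ` from
`Bₙ₊₁` keeps the sequence injective.
-/

open Filter Function

attribute [local instance] Ultrafilter.mul Ultrafilter.semigroup

theorem injective_of_mem_antitone {α : Type*} {B : ℕ → Set α} {x : ℕ → α}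
    (hB : Antitone B) (hx : ∀ n, x n ∈ B n)
    (hnot : ∀ n, x n ∉ B (n + 1)) : Injective x :=
  .of_lt_imp_ne fun m n hmn heq => hnot m (hB hmn (heq ▸ hx n))

section ListProd

variable {X : Type} [Semigroup X] {B : ℕ → Set X} {x : ℕ → X}

theorem listProd_mul (a b : X) (l : List X) :
    listProd (a * b) l = a * listProd b l := by
  induction l generalizing b with
  | nil => rfl
  | cons c t ih => exact (congrArg (listProd · t) (mul_assoc a b c)).trans (ih (b * c))

theorem listProd_mem_of_antitone (hB : Antitone B) (hx : ∀ n, x n ∈ B n)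
    (hmul : ∀ n, B (n + 1) ⊆ (x n * ·) ⁻¹' B n) (j : ℕ) (l : List ℕ)
    (hl : (j :: l).IsChain (· < ·)) : listProd (x j) (l.map x) ∈ B j := by
  induction l generalizing j with
  | nil => exact hx j
  | cons i t ih =>
    obtain ⟨hji, hit⟩ := List.isChain_cons_cons.mp hl
    rw [List.map_cons, listProd, listProd_mul]
    exact hmul j (hB hji (ih i hit))

end ListProd

namespace Ultrafilter

variable {X : Type}

theorem isClosed_setOf_le_cofinite : IsClosed {U : Ultrafilter X | (U : Filter X) ≤ cofinite} := by
  simp only [le_cofinite_iff_compl_singleton_mem, Set.ofPred_forall]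
  exact isClosed_iInter fun x => ultrafilter_isClosed_basic _

variable [Semigroup X]

theorem le_cofinite_of_mul_self_eq_self (hX : ∀ x : X, x * x ≠ x) {U : Ultrafilter X}
    (hU : U * U = U) : (U : Filter X) ≤ cofinite := by
  refine U.le_cofinite_or_eq_pure.resolve_right ?_
  rintro ⟨a, rfl⟩
  have hpure : (pure a * pure a : Ultrafilter X) = pure (a * a) := rfl
  exact hX a (pure_injective (hpure.symm.trans hU))

theorem mul_le_cofinite (hX : ∀ a b : X, {x : X | a * x = b}.Finite) (U : Ultrafilter X)
    {V : Ultrafilter X} (hV : (V : Filter X) ≤ cofinite) :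
    ((U * V : Ultrafilter X) : Filter X) ≤ cofinite := by
  refine le_cofinite_iff_compl_singleton_mem.2 fun b => ?_
  show ∀ᶠ a in (U : Filter X), ∀ᶠ y in (V : Filter X), a * y ∈ ({b}ᶜ : Set X)
  exact .of_forall fun a => hV (hX a b).compl_mem_cofinite

theorem exists_mul_self_eq_self_le_cofinite [Infinite X]
    (hX : ∀ a b : X, {x : X | a * x = b}.Finite) :
    ∃ U : Ultrafilter X, U * U = U ∧ (U : Filter X) ≤ cofinite := by
  obtain ⟨U, hU, hUU⟩ := exists_idempotent_in_compact_subsemigroup continuous_mul_left _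
    ⟨hyperfilter X, hyperfilter_le_cofinite⟩ isClosed_setOf_le_cofinite.isCompact
    fun U _ _ hV => mul_le_cofinite hX U hV
  exact ⟨U, hUU, hU⟩

theorem exists_mem_inter_preimage_mul_sdiff_mem {U : Ultrafilter X} (hU : U * U = U)
    (hcof : (U : Filter X) ≤ cofinite) {s : Set X} (hs : s ∈ U) :
    ∃ a ∈ s, (s ∩ (a * ·) ⁻¹' s) \ {a} ∈ U := by
  have hss : ∀ᶠ a in (U : Filter X), (a * ·) ⁻¹' s ∈ U := by
    rw [← hU] at hs
    exact hs
  obtain ⟨a, has, hat⟩ := nonempty_of_mem (inter_mem hs hss)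
  exact ⟨a, has, sdiff_mem (inter_mem hs hat) (le_cofinite_iff_compl_singleton_mem.1 hcof a)⟩

theorem exists_galvinGlazer_seq {U : Ultrafilter X} (hU : U * U = U)
    (hcof : (U : Filter X) ≤ cofinite) {A : Set X} (hA : A ∈ U) :
    ∃ (B : ℕ → Set X) (x : ℕ → X), B 0 = A ∧
      (∀ n, x n ∈ B n) ∧ ∀ n, B (n + 1) = (B n ∩ (x n * ·) ⁻¹' B n) \ {x n} := by
  choose a ha hnext using fun s (hs : s ∈ U) => exists_mem_inter_preimage_mul_sdiff_mem hU hcof hs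
  let next : {s // s ∈ U} → {s // s ∈ U} := fun s => ⟨_, hnext s.1 s.2⟩
  let B : ℕ → {s // s ∈ U} := fun n => next^[n] ⟨A, hA⟩
  refine ⟨fun n => (B n).1, fun n => a _ (B n).2, rfl, fun n => ha _ _, fun n => ?_⟩
  simp only [B, iterate_succ_apply']
  rfl

theorem exists_injective_listProd_mem {U : Ultrafilter X} (hU : U * U = U)
    (hcof : (U : Filter X) ≤ cofinite) {A : Set X} (hA : A ∈ U) :
    ∃ x : ℕ → X, Injective x ∧
      ∀ (j : ℕ) (l : List ℕ), (j :: l).IsChain (· < ·) → listProd (x j) (l.map x) ∈ A := by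
  obtain ⟨B, x, rfl, hx, hB⟩ := exists_galvinGlazer_seq hU hcof hA
  have hsucc : ∀ n, B (n + 1) ⊆ (B n ∩ (x n * ·) ⁻¹' B n) \ {x n} := fun n => (hB n).le
  have hanti : Antitone B :=
    antitone_nat_of_succ_le fun n => (hsucc n).trans (Set.sdiff_subset.trans Set.inter_subset_left)
  refine ⟨x, injective_of_mem_antitone hanti hx fun n h => (hsucc n h).2 rfl, fun j l hl => ?_⟩
  exact hanti j.zero_le <| listProd_mem_of_antitone hanti hx
    (fun n => (hsucc n).trans (Set.sdiff_subset.trans Set.inter_subset_right)) j l hl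

end Ultrafilter

open Ultrafilter in
/-- The Finite Products Theorem: if `X` is an infinite semigroup which is
either idempotent-free or weakly left cancellative, then for every finite
coloring of `X` there are a color `i` and an injective sequence in `X` all of
whose finite products along increasing index tuples have color `i`. -/
theorem stmt_9 (X : Type) [Semigroup X] [Infinite X]
    (h : (∀ x : X, x * x ≠ x) ∨ ∀ a b : X, {x : X | a * x = b}.Finite)
    (k : ℕ) (c : X → Fin k) :
    ∃ (i : Fin k) (x : ℕ → X), Function.Injective x ∧
      ∀ (j : ℕ) (l : List ℕ), (j :: l).Chain' (· < ·) →
        c (listProd (x j) (l.map x)) = i := by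
  obtain ⟨U, hU, hcof⟩ : ∃ U : Ultrafilter X, U * U = U ∧ (U : Filter X) ≤ cofinite := by
    rcases h with hX | hX
    · obtain ⟨U, hU⟩ := exists_idempotent_of_compact_t2_of_continuous_mul_left
        (continuous_mul_left (M := X))
      exact ⟨U, hU, le_cofinite_of_mul_self_eq_self hX hU⟩
    · exact exists_mul_self_eq_self_le_cofinite hX
  obtain ⟨i, hi⟩ := (U.map c).eq_pure_of_finite
  have hA : c ⁻¹' {i} ∈ U := by
    rw [← Ultrafilter.mem_map, hi]
    exact Ultrafilter.mem_pure.2 rfl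
  obtain ⟨x, hx, hprod⟩ := exists_injective_listProd_mem hU hcof hA
  exact ⟨i, x, hx, hprod⟩
end

section
/- (Bergelson–Hindman) For every finite coloring of the positive natural numbers there exist a color class A and two injective infinite sequences (xᵢ) and (yᵢ) such that FS(xᵢ)_{i<ω} ∪ FP(yᵢ)_{i<ω} ⊆ A, i.e. all finite sums of the xᵢ (over increasing index tuples) and all finite products of the yᵢ lie in A. -/
/-!
Let `E` be the set of nonprincipal additive idempotents of `βℕ`. Its closure is a compact
subsemigroup of `(βℕ, *)`: for `n > 0` the dilation `U ↦ n U` maps `E` into itself, and `p * q` is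
a limit of the products `pure n * q = n q` with `n ∈ p`. A multiplicative idempotent `q` of the
closure contains a colour class `A` of numbers `≥ 2`, hence, by Hindman's argument, an FP-set;
since `q` lies in the closure of `E`, `A` also belongs to an additive idempotent and contains an
FS-set. Grouping the generating sequences into consecutive blocks of increasing value makes them
injective.
-/

open Filter Hindman

attribute [local instance] Ultrafilter.mul Ultrafilter.add
  Ultrafilter.semigroup Ultrafilter.addSemigroup

namespace Ultrafilter

theorem continuous_map {α β : Type*} (f : α → β) : Continuous (Ultrafilter.map f) :=
  ultrafilterBasis_is_basis.continuous_iff.2 <| Set.forall_mem_range.2 fun s =>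
    ultrafilter_isOpen_basic (f ⁻¹' s)

theorem mem_closure_image_pure {α : Type*} {s : Set α} {U : Ultrafilter α} (hs : s ∈ U) :
    U ∈ closure (pure '' s) := by
  rw [ultrafilterBasis_is_basis.mem_closure_iff]
  rintro _ ⟨t, rfl⟩ (ht : t ∈ U)
  obtain ⟨m, hmt, hms⟩ := nonempty_of_mem (inter_mem ht hs)
  exact ⟨pure m, hmt, m, hms, rfl⟩

theorem isClosed_setOf_coe_le {α : Type*} (f : Filter α) :
    IsClosed {U : Ultrafilter α | ↑U ≤ f} := by
  have : {U : Ultrafilter α | ↑U ≤ f} = ⋂ s ∈ f, {U | s ∈ U} := by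
    ext U; simp [Filter.le_def]
  rw [this]
  exact isClosed_biInter fun s _ => ultrafilter_isClosed_basic s

theorem pure_mul_eq_map {M : Type*} [Mul M] (m : M) (U : Ultrafilter M) :
    pure m * U = U.map (m * ·) :=
  coe_inj.1 <| Filter.ext' fun _ => by
    rw [eventually_mul, coe_pure, eventually_pure, coe_map, eventually_map]

theorem map_add_map {M N : Type*} [Add M] [Add N] (f : M →ₙ+ N) (U V : Ultrafilter M) :
    U.map f + V.map f = (U + V).map f :=
  coe_inj.1 <| Filter.ext' fun _ => by
    simp only [eventually_add, coe_map, eventually_map, map_add]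

theorem coe_add_le_atTop {M : Type*} [AddCommMonoid M] [PartialOrder M] [CanonicallyOrderedAdd M]
    {U : Ultrafilter M} (hU : (U : Filter M) ≤ atTop) (V : Ultrafilter M) :
    ((U + V : Ultrafilter M) : Filter M) ≤ atTop := by
  refine tendsto_id'.1 (tendsto_atTop.2 fun n => (eventually_add U V _).2 ?_)
  filter_upwards [tendsto_atTop.1 (tendsto_id'.2 hU) n] with m hm
  exact .of_forall fun m' => le_add_right hm

theorem mul_mem_closure_of_forall_map_mem {M : Type*} [Mul M] {T : Set (Ultrafilter M)} {s : Set M}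
    (hT : ∀ m ∈ s, ∀ U ∈ T, U.map (m * ·) ∈ closure T) {p q : Ultrafilter M} (hp : s ∈ p)
    (hq : q ∈ closure T) : p * q ∈ closure T := by
  have hpure : (· * q) '' (pure '' s) ⊆ closure T := by
    rintro _ ⟨_, ⟨m, hm, rfl⟩, rfl⟩
    change pure m * q ∈ _
    rw [pure_mul_eq_map]
    refine closure_minimal ?_ isClosed_closure
      (image_closure_subset_closure_image (continuous_map _) ⟨q, hq, rfl⟩)
    rintro _ ⟨U, hU, rfl⟩
    exact hT m hm U hU
  exact closure_minimal hpure isClosed_closure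
    (image_closure_subset_closure_image (continuous_mul_left q) ⟨p, mem_closure_image_pure hp, rfl⟩)

end Ultrafilter

-- On `ℕ`, `↑U ≤ atTop` says exactly that `U` is nonprincipal.
def addIdempotentsAtTop : Set (Ultrafilter ℕ) := {U | (U : Filter ℕ) ≤ atTop ∧ U + U = U}

theorem addIdempotentsAtTop_nonempty : addIdempotentsAtTop.Nonempty := by
  have hyper : ((hyperfilter ℕ : Ultrafilter ℕ) : Filter ℕ) ≤ atTop :=
    Nat.cofinite_eq_atTop ▸ hyperfilter_le_cofinite
  obtain ⟨U, hU, hUU⟩ := exists_idempotent_in_compact_add_subsemigroup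
    Ultrafilter.continuous_add_left {U : Ultrafilter ℕ | (U : Filter ℕ) ≤ atTop} ⟨_, hyper⟩
    (Ultrafilter.isClosed_setOf_coe_le atTop).isCompact
    fun U hU V _ => Ultrafilter.coe_add_le_atTop hU V
  exact ⟨U, hU, hUU⟩

theorem map_mul_left_mem_addIdempotentsAtTop {n : ℕ} (hn : 0 < n) {U : Ultrafilter ℕ}
    (hU : U ∈ addIdempotentsAtTop) : U.map (n * ·) ∈ addIdempotentsAtTop :=
  ⟨(map_mono hU.1).trans (tendsto_id.const_mul_atTop' hn),
    (Ultrafilter.map_add_map (AddMonoidHom.mulLeft n).toAddHom U U).trans (by rw [hU.2]; rfl)⟩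

theorem closure_addIdempotentsAtTop_subset :
    closure addIdempotentsAtTop ⊆ {U : Ultrafilter ℕ | (U : Filter ℕ) ≤ atTop} :=
  closure_minimal (fun _ hU => hU.1) (Ultrafilter.isClosed_setOf_coe_le atTop)

theorem exists_mul_idempotent_mem_closure_addIdempotentsAtTop :
    ∃ q ∈ closure addIdempotentsAtTop, q * q = q :=
  exists_idempotent_in_compact_subsemigroup Ultrafilter.continuous_mul_left _
    (addIdempotentsAtTop_nonempty.mono subset_closure) isClosed_closure.isCompact
    fun _ hp _ hq => Ultrafilter.mul_mem_closure_of_forall_map_mem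
      (fun _ hn _ hU => subset_closure (map_mul_left_mem_addIdempotentsAtTop hn hU))
      (closure_addIdempotentsAtTop_subset hp (Ioi_mem_atTop 0)) hq

namespace Hindman

@[to_additive]
theorem FP.prod_prod_Ico_mem {M : Type*} [CommMonoid M] (a : Stream' M) {s : ℕ → ℕ}
    (hs : StrictMono s) {F : Finset ℕ} (hF : F.Nonempty) :
    ∏ j ∈ F, ∏ i ∈ Finset.Ico (s j) (s (j + 1)), a.get i ∈ FP a := by
  have hdisj : (F : Set ℕ).PairwiseDisjoint fun j => Finset.Ico (s j) (s (j + 1)) :=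
    fun _ _ _ _ hij => Finset.disjoint_coe.1 <| by
      simpa using hs.monotone.pairwise_disjoint_on_Ico_succ hij
  obtain ⟨j, hj⟩ := hF
  rw [← Finset.prod_biUnion hdisj]
  exact FP.finsetProd a _
    ⟨s j, Finset.mem_biUnion.2 ⟨j, hj, Finset.left_mem_Ico.2 (hs j.lt_succ_self)⟩⟩

end Hindman

theorem exists_strictMono_with_strictMono_Ico_values {v : Finset ℕ → ℕ} (hv : Monotone v)
    (hcard : ∀ t, t.card ≤ v t) :
    ∃ s : ℕ → ℕ, StrictMono s ∧ StrictMono fun j => v (Finset.Ico (s j) (s (j + 1))) := by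
  -- Each block is longer, hence worth more, than everything before it.
  let s : ℕ → ℕ := fun j => Nat.rec 0 (fun _ n => n + v (Finset.range n) + 1) j
  have hsucc : ∀ j, s (j + 1) = s j + v (Finset.range (s j)) + 1 := fun _ => rfl
  have hblock : ∀ j, v (Finset.range (s j)) < v (Finset.Ico (s j) (s (j + 1))) := fun j =>
    calc v (Finset.range (s j)) < (Finset.Ico (s j) (s (j + 1))).card := by
          rw [Nat.card_Ico, hsucc]; omega
      _ ≤ _ := hcard _
  refine ⟨s, strictMono_nat_of_lt_succ fun j => by rw [hsucc]; omega,
    strictMono_nat_of_lt_succ fun j => ?_⟩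
  calc v (Finset.Ico (s j) (s (j + 1))) ≤ v (Finset.range (s (j + 1))) := by
        rw [Finset.range_eq_Ico]; exact hv (Finset.Ico_subset_Ico (Nat.zero_le _) le_rfl)
    _ < _ := hblock (j + 1)

theorem exists_strictMono_forall_sum_mem_FS (a : Stream' ℕ) (ha : ∀ i, 0 < a.get i) :
    ∃ x : ℕ → ℕ, StrictMono x ∧ ∀ F : Finset ℕ, F.Nonempty → ∑ j ∈ F, x j ∈ FS a := by
  obtain ⟨s, hs, hx⟩ := exists_strictMono_with_strictMono_Ico_values
    (v := fun t => ∑ i ∈ t, a.get i) (fun _ _ h => Finset.sum_le_sum_of_subset h)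
    fun t => (Finset.card_eq_sum_ones t).trans_le (Finset.sum_le_sum fun i _ => ha i)
  exact ⟨_, hx, fun _ hF => FS.sum_sum_Ico_mem a hs hF⟩

theorem exists_strictMono_forall_prod_mem_FP (a : Stream' ℕ) (ha : ∀ i, 2 ≤ a.get i) :
    ∃ y : ℕ → ℕ, StrictMono y ∧ ∀ F : Finset ℕ, F.Nonempty → ∏ j ∈ F, y j ∈ FP a := by
  obtain ⟨s, hs, hy⟩ := exists_strictMono_with_strictMono_Ico_values
    (v := fun t => ∏ i ∈ t, a.get i)
    (fun _ _ h => Finset.prod_le_prod_of_subset_of_one_le' h fun i _ _ => (ha i).trans' one_le_two)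
    fun t => Nat.lt_two_pow_self.le.trans (Finset.pow_card_le_prod t _ 2 fun i _ => ha i)
  exact ⟨_, hy, fun _ hF => FP.prod_prod_Ico_mem a hs hF⟩

/-- Bergelson–Hindman: for every finite coloring of the positive natural
numbers there are a color `i` and injective sequences `(xᵢ)` and `(yᵢ)` of
positive naturals such that all finite sums of the `xᵢ` and all finite
products of the `yᵢ` have color `i`. -/
theorem stmt_11 (k : ℕ) (c : ℕ → Fin k) :
    ∃ (i : Fin k) (x y : ℕ → ℕ),
      (∀ j, 0 < x j) ∧ Function.Injective x ∧
      (∀ j, 0 < y j) ∧ Function.Injective y ∧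
      (∀ F : Finset ℕ, F.Nonempty → c (∑ j ∈ F, x j) = i) ∧
      (∀ F : Finset ℕ, F.Nonempty → c (∏ j ∈ F, y j) = i) := by
  obtain ⟨q, hq, hqq⟩ := exists_mul_idempotent_mem_closure_addIdempotentsAtTop
  obtain ⟨i, hi⟩ := (q.map c).eq_pure_of_finite
  let A : Set ℕ := {m | 2 ≤ m ∧ c m = i}
  have hAq : A ∈ q := inter_mem (closure_addIdempotentsAtTop_subset hq (Ici_mem_atTop 2))
    (Ultrafilter.mem_map.1 (by rw [hi]; exact Set.mem_singleton i))
  obtain ⟨p, hAp, hp⟩ := mem_closure_iff.1 hq _ (ultrafilter_isOpen_basic A) hAq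
  obtain ⟨a, ha⟩ := exists_FS_of_large p hp.2 A hAp
  obtain ⟨b, hb⟩ := exists_FP_of_large q hqq A hAq
  obtain ⟨x, hx, hxa⟩ :=
    exists_strictMono_forall_sum_mem_FS a fun j => zero_lt_two.trans_le (ha (FS.singleton a j)).1
  obtain ⟨y, hy, hyb⟩ := exists_strictMono_forall_prod_mem_FP b fun j => (hb (FP.singleton b j)).1
  refine ⟨i, x, y, fun j => ?_, hx.injective, fun j => ?_, hy.injective,
    fun F hF => (ha (hxa F hF)).2, fun F hF => (hb (hyb F hF)).2⟩
  · simpa using zero_lt_two.trans_le (ha (hxa {j} (Finset.singleton_nonempty j))).1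
  · simpa using zero_lt_two.trans_le (hb (hyb {j} (Finset.singleton_nonempty j))).1
end

section
/- Let K be a polyring and (a⃗ᵢ)_{i<ω} any sequence in Kⁿ. Then 0⃗ lies in the closure of FS(a⃗ᵢ)_{i<ω} in the Zariski topology of Kⁿ. -/
/-!
If `0` were not in the closure, some basic neighbourhood `⋂ₖ {Fₖ ≠ 0}` of `0` would miss
`FS(aᵢ)`, so the finitely many root sets of the `Fₖ` would cover `FS(aᵢ)`, and by Hindman's
theorem one of them, say that of `F` with `F(0) ≠ 0`, contains a whole `FS(bᵢ)`.
In a polyring every term function has finite degree in the sense of iterated forward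
differences, because operations additive in each argument add degrees. For a function of degree
`D` the alternating sum `∑_{E ⊆ {0,…,D}} (-1)^|E| F(∑_{i∈E} bᵢ)` vanishes; every summand with
`E ≠ ∅` is `0` as `∑_{i∈E} bᵢ ∈ FS(bᵢ)`, which leaves `F(0) = 0`.
-/

/-- Terms over a polyring signature: variables, constants from `K` (including
`0`), addition, and extra operations indexed by `ι` with arities `ar`. -/
inductive PTerm (K ι : Type) (ar : ι → ℕ) (n : ℕ) : Type
  | var : Fin n → PTerm K ι ar n
  | const : K → PTerm K ι ar n
  | add : PTerm K ι ar n → PTerm K ι ar n → PTerm K ι ar n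
  | op (i : ι) : (Fin (ar i) → PTerm K ι ar n) → PTerm K ι ar n

variable {K ι : Type} {ar : ι → ℕ} {n : ℕ}

/-- Evaluation of a term at a point of `Kⁿ`. -/
def PTerm.eval [AddCommGroup K] (ops : ∀ i, (Fin (ar i) → K) → K) :
    PTerm K ι ar n → (Fin n → K) → K
  | .var j, a => a j
  | .const c, _ => c
  | .add s t, a => s.eval ops a + t.eval ops a
  | .op i ts, a => ops i fun j => (ts j).eval ops a

/-- A monomial is a term not containing `+`. -/
def PTerm.IsMonomial : PTerm K ι ar n → Prop
  | .var _ => True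
  | .const _ => True
  | .add _ _ => False
  | .op _ ts => ∀ j, (ts j).IsMonomial

/-- A polynomial is a finite sum of monomials. -/
def PTerm.IsPolynomial : PTerm K ι ar n → Prop
  | .add s t => s.IsPolynomial ∧ t.IsPolynomial
  | t => t.IsMonomial

/-- Degree bookkeeping: the number of occurrences of variables from `V` in a
monomial, extended to sums by taking the maximum of the summands (so on
polynomials this computes the degree w.r.t. `V`). -/
def PTerm.occ : PTerm K ι ar n → Finset (Fin n) → ℕ
  | .var j, V => if j ∈ V then 1 else 0
  | .const _, _ => 0
  | .add s t, V => max (s.occ V) (t.occ V)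
  | .op _ ts, V => ∑ j, (ts j).occ V

/-- The degree of a term w.r.t. a set `V` of variables: the minimal degree
w.r.t. `V` of a polynomial representing (inducing the same function as) it. -/
noncomputable def PTerm.degree [AddCommGroup K] (ops : ∀ i, (Fin (ar i) → K) → K)
    (F : PTerm K ι ar n) (V : Finset (Fin n)) : ℕ :=
  sInf {d | ∃ P : PTerm K ι ar n, P.IsPolynomial ∧
    (∀ a, P.eval ops a = F.eval ops a) ∧ P.occ V ≤ d}

/-- The polyring condition: each extra operation is distributive w.r.t. `+`,
i.e. additive in every argument. -/
def IsPolyring [AddCommGroup K] (ops : ∀ i, (Fin (ar i) → K) → K) : Prop :=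
  ∀ (i : ι) (j : Fin (ar i)) (a : Fin (ar i) → K) (x y : K),
    ops i (Function.update a j (x + y)) =
      ops i (Function.update a j x) + ops i (Function.update a j y)

/-- The Zariski topology on `Kⁿ`: root sets of terms form a closed subbase,
so the closed sets are the intersections of finite unions of root sets. -/
def zariskiTopology [AddCommGroup K] (ops : ∀ i, (Fin (ar i) → K) → K) (n : ℕ) :
    TopologicalSpace (Fin n → K) :=
  TopologicalSpace.generateFrom
    {U | ∃ F : PTerm K ι ar n, U = {a | F.eval ops a = 0}ᶜ}

open fwdDiff

/-- `DiffDegreeLE k f`: every `(k + 1)`-fold forward difference `Δ_[v₀] ⋯ Δ_[vₖ] f` vanishes,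
the notion of "polynomial of degree at most `k`" that makes sense on any abelian group. -/
def DiffDegreeLE {V W : Type*} [AddCommMonoid V] [AddCommGroup W] : ℕ → (V → W) → Prop
  | 0, f => ∀ y z, f y = f z
  | k + 1, f => ∀ v, DiffDegreeLE k (Δ_[v] f)

namespace DiffDegreeLE

variable {V W : Type*} [AddCommMonoid V] [AddCommGroup W]

theorem fwdDiff_eq_zero {f : V → W} (hf : DiffDegreeLE 0 f) (v : V) : Δ_[v] f = 0 :=
  funext fun y => sub_eq_zero.mpr (hf (y + v) y)

theorem succ {k : ℕ} {f : V → W} (hf : DiffDegreeLE k f) : DiffDegreeLE (k + 1) f := by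
  induction k generalizing f with
  | zero =>
    intro v y z
    rw [hf.fwdDiff_eq_zero v]
    rfl
  | succ k ih => exact fun v => ih (hf v)

theorem mono {k l : ℕ} {f : V → W} (hf : DiffDegreeLE k f) (hkl : k ≤ l) :
    DiffDegreeLE l f := by
  induction hkl with
  | refl => exact hf
  | step _ ih => exact ih.succ

theorem const (k : ℕ) (c : W) : DiffDegreeLE k (fun _ : V => c) :=
  DiffDegreeLE.mono (k := 0) (fun _ _ => rfl) k.zero_le

theorem add {k : ℕ} {f g : V → W} (hf : DiffDegreeLE k f) (hg : DiffDegreeLE k g) :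
    DiffDegreeLE k (f + g) := by
  induction k generalizing f g with
  | zero => intro y z; simp only [Pi.add_apply, hf y z, hg y z]
  | succ k ih => intro v; rw [fwdDiff_add]; exact ih (hf v) (hg v)

theorem sum {k : ℕ} {α : Type*} (s : Finset α) {f : α → V → W}
    (hf : ∀ a ∈ s, DiffDegreeLE k (f a)) : DiffDegreeLE k (∑ a ∈ s, f a) := by
  classical
  induction s using Finset.induction_on with
  | empty => rw [Finset.sum_empty]; exact const k 0
  | insert a s ha ih =>
    rw [Finset.sum_insert ha]
    exact (hf a (s.mem_insert_self a)).add (ih fun b hb => hf b (Finset.mem_insert_of_mem hb))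

end DiffDegreeLE

theorem AddMonoidHom.diffDegreeLE_one {V W : Type*} [AddCommMonoid V] [AddCommGroup W]
    (φ : V →+ W) : DiffDegreeLE 1 φ := by
  intro v y z
  simp only [fwdDiff, map_add, add_sub_cancel_left]

theorem MultilinearMap.fwdDiff_comp {R V W ι : Type*} {M : ι → Type*} [Semiring R]
    [AddCommMonoid V] [AddCommGroup W] [∀ j, AddCommGroup (M j)] [Module R W]
    [∀ j, Module R (M j)] [Fintype ι] [DecidableEq ι] (g : MultilinearMap R M W)
    (f : ∀ j, V → M j) (v : V) :
    Δ_[v] (fun y => g fun j => f j y) =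
      ∑ s ∈ (Finset.univ : Finset (Finset ι)).erase ∅,
        fun y => g (s.piecewise (fun j => Δ_[v] (f j) y) fun j => f j y) := by
  funext y
  have hshift : (fun j => f j (y + v)) = (fun j => Δ_[v] (f j) y) + fun j => f j y := by
    ext j; simp [fwdDiff]
  rw [Finset.sum_apply]
  change g (fun j => f j (y + v)) - g (fun j => f j y) = _
  rw [hshift, g.map_add_univ, ← Finset.add_sum_erase _ _ (Finset.mem_univ ∅),
    Finset.piecewise_empty, add_sub_cancel_left]

theorem MultilinearMap.diffDegreeLE_comp {R V W ι : Type*} {M : ι → Type*} [Semiring R]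
    [AddCommMonoid V] [AddCommGroup W] [∀ j, AddCommGroup (M j)] [Module R W]
    [∀ j, Module R (M j)] [Fintype ι] (g : MultilinearMap R M W) {f : ∀ j, V → M j}
    {k : ι → ℕ} (hf : ∀ j, DiffDegreeLE (k j) (f j)) :
    DiffDegreeLE (∑ j, k j) (fun y => g fun j => f j y) := by
  classical
  suffices h : ∀ N (k : ι → ℕ) (f : ∀ j, V → M j), (∀ j, DiffDegreeLE (k j) (f j)) →
      ∑ j, k j ≤ N → DiffDegreeLE N (fun y => g fun j => f j y) from h _ k f hf le_rfl
  intro N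
  induction N with
  | zero =>
    intro k f hf hk y z
    have hconst : ∀ j, f j y = f j z := fun j =>
      (Finset.sum_eq_zero_iff.mp (Nat.le_zero.mp hk) j (Finset.mem_univ j) ▸ hf j) y z
    simp only [hconst]
  | succ N ih =>
    intro k f hf hk v
    -- differentiating the arguments in `s ≠ ∅` lowers the total degree by `#s`, unless one of
    -- them is constant, in which case the summand vanishes
    rw [g.fwdDiff_comp f v]
    refine DiffDegreeLE.sum _ fun s hs => ?_
    by_cases hzero : ∃ j ∈ s, k j = 0
    · obtain ⟨j, hj, hkj⟩ := hzero
      convert DiffDegreeLE.const (V := V) N (0 : W) using 1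
      funext y
      refine g.map_coord_zero j ?_
      rw [Finset.piecewise_eq_of_mem _ _ _ hj, DiffDegreeLE.fwdDiff_eq_zero (hkj ▸ hf j)]
      rfl
    · push Not at hzero
      have hs : s.Nonempty := Finset.nonempty_iff_ne_empty.mpr (Finset.ne_of_mem_erase hs)
      have hdeg : ∀ j, DiffDegreeLE (if j ∈ s then k j - 1 else k j)
          (s.piecewise (fun j => Δ_[v] (f j)) f j) := by
        intro j
        by_cases hj : j ∈ s
        · obtain ⟨m, hm⟩ := Nat.exists_eq_succ_of_ne_zero (hzero j hj)
          simp only [hj, if_true, Finset.piecewise_eq_of_mem, hm, Nat.succ_sub_one]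
          exact (hm ▸ hf j) v
        · simpa [hj] using hf j
      have hsum : ∑ j, (if j ∈ s then k j - 1 else k j) ≤ N := by
        have hcount : ∑ j, (if j ∈ s then k j - 1 else k j) + s.card = ∑ j, k j := by
          have hcard : s.card = ∑ j, if j ∈ s then 1 else 0 := by simp
          rw [hcard, ← Finset.sum_add_distrib]
          refine Finset.sum_congr rfl fun j _ => ?_
          split_ifs with hj
          · have := hzero j hj
            omega
          · rfl
        have := hs.card_pos
        omega
      convert ih _ _ hdeg hsum using 2 with y
      congr 1
      ext j
      by_cases hj : j ∈ s <;> simp [hj]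

theorem DiffDegreeLE.sum_powerset_neg_one_pow_smul_eq_zero {V W α : Type*} [AddCommMonoid V]
    [AddCommGroup W] [DecidableEq α] {D : ℕ} {f : V → W} (hf : DiffDegreeLE D f)
    {s : Finset α} (hs : D < s.card) (x : α → V) :
    ∑ E ∈ s.powerset, (-1 : ℤ) ^ E.card • f (∑ i ∈ E, x i) = 0 := by
  induction s using Finset.induction_on generalizing D f with
  | empty => simp at hs
  | insert j s hj ih =>
    have hpair : ∀ E ∈ s.powerset,
        (-1 : ℤ) ^ E.card • f (∑ i ∈ E, x i) +
          (-1 : ℤ) ^ (insert j E).card • f (∑ i ∈ insert j E, x i) =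
        -((-1 : ℤ) ^ E.card • Δ_[x j] f (∑ i ∈ E, x i)) := by
      intro E hE
      have hjE : j ∉ E := fun h => hj (Finset.mem_powerset.mp hE h)
      rw [Finset.card_insert_of_notMem hjE, Finset.sum_insert hjE, add_comm (x j)]
      simp only [fwdDiff, pow_succ, mul_neg_one, neg_smul, smul_sub]
      abel
    rw [Finset.sum_powerset_insert hj, ← Finset.sum_add_distrib, Finset.sum_congr rfl hpair,
      Finset.sum_neg_distrib, neg_eq_zero]
    cases D with
    | zero => simp [hf.fwdDiff_eq_zero]
    | succ D =>
      rw [Finset.card_insert_of_notMem hj] at hs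
      exact ih (hf (x j)) (by omega)

theorem DiffDegreeLE.apply_zero_eq_zero_of_FS {V W : Type*} [AddCommMonoid V] [AddCommGroup W]
    {D : ℕ} {f : V → W} (hf : DiffDegreeLE D f) (b : Stream' V)
    (hb : ∀ x ∈ Hindman.FS b, f x = 0) : f 0 = 0 := by
  have h := hf.sum_powerset_neg_one_pow_smul_eq_zero (s := Finset.range (D + 1)) (by simp) b.get
  rwa [Finset.sum_eq_single_of_mem ∅ (Finset.empty_mem_powerset _), Finset.sum_empty,
    Finset.card_empty, pow_zero, one_smul] at h
  intro E _ hE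
  rw [hb _ (Hindman.FS.finsetSum b E (Finset.nonempty_iff_ne_empty.mpr hE)), smul_zero]

theorem Hindman.exists_finset_sum_of_mem_FS {M : Type*} [AddCommMonoid M] {a : Stream' M} {m : M}
    (hm : m ∈ Hindman.FS a) : ∃ S : Finset ℕ, S.Nonempty ∧ m = ∑ i ∈ S, a.get i := by
  induction hm with
  | head' a => exact ⟨{0}, Finset.singleton_nonempty 0, by simp [Stream'.head]⟩
  | tail' a m _ ih =>
    obtain ⟨S, hS, rfl⟩ := ih
    exact ⟨S.map (addRightEmbedding 1), hS.map, by simp [Stream'.get_tail]⟩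
  | cons' a m _ ih =>
    obtain ⟨S, hS, rfl⟩ := ih
    refine ⟨insert 0 (S.map (addRightEmbedding 1)), Finset.insert_nonempty _ _, ?_⟩
    rw [Finset.sum_insert (by simp)]
    simp [Stream'.get_tail, Stream'.head]

def IsPolyring.multilinearMap [AddCommGroup K] {ops : ∀ i, (Fin (ar i) → K) → K}
    (hpoly : IsPolyring ops) (i : ι) : MultilinearMap ℤ (fun _ : Fin (ar i) => K) K :=
  MultilinearMap.mk' (ops i) (fun m j => hpoly i j m) fun m j c x =>
    map_zsmul (AddMonoidHom.mk' (fun x => ops i (Function.update m j x)) (hpoly i j m)) c x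

theorem PTerm.diffDegreeLE_eval [AddCommGroup K] {ops : ∀ i, (Fin (ar i) → K) → K}
    (hpoly : IsPolyring ops) (F : PTerm K ι ar n) :
    DiffDegreeLE (F.occ Finset.univ) (F.eval ops) := by
  induction F with
  | var j =>
    show DiffDegreeLE (if j ∈ Finset.univ then 1 else 0) _
    rw [if_pos (Finset.mem_univ j)]
    exact (Pi.evalAddMonoidHom (fun _ => K) j).diffDegreeLE_one
  | const c => exact DiffDegreeLE.const 0 c
  | add s t ihs iht =>
    exact (ihs.mono (le_max_left _ _)).add (iht.mono (le_max_right _ _))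
  | op i ts ih => exact (hpoly.multilinearMap i).diffDegreeLE_comp ih

/-- For any sequence `(a⃗ᵢ)_{i<ω}` in `Kⁿ` over a polyring `K`, the zero vector
lies in the Zariski closure of the set `FS(a⃗ᵢ)` of nonempty finite subset
sums. -/
theorem stmt_17 (K ι : Type) [AddCommGroup K] (ar : ι → ℕ)
    (ops : ∀ i, (Fin (ar i) → K) → K) (hpoly : IsPolyring ops)
    (n : ℕ) (a : ℕ → Fin n → K) :
    (0 : Fin n → K) ∈ @closure _ (zariskiTopology ops n)
      {b | ∃ S : Finset ℕ, S.Nonempty ∧ b = ∑ i ∈ S, a i} := by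
  have hbasis := @TopologicalSpace.isTopologicalBasis_of_subbasis _ (zariskiTopology ops n) _ rfl
  rw [@TopologicalSpace.IsTopologicalBasis.mem_closure_iff _ (zariskiTopology ops n) _ hbasis]
  rintro _ ⟨fs, ⟨hfin, hsub⟩, rfl⟩ h0
  by_contra hdisj
  have hcover : Hindman.FS (a : Stream' (Fin n → K)) ⊆ ⋃₀ (compl '' fs) := by
    intro x hx
    obtain ⟨S, hS, rfl⟩ := Hindman.exists_finset_sum_of_mem_FS hx
    by_contra hx'
    refine hdisj ⟨_, ?_, S, hS, rfl⟩
    simpa [Stream'.get] using hx'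
  obtain ⟨_, ⟨U, hU, rfl⟩, b, hb⟩ := Hindman.FS_partition_regular _ _ (hfin.image _) hcover
  obtain ⟨F, rfl⟩ := hsub hU
  exact h0 _ hU <| (F.diffDegreeLE_eval hpoly).apply_zero_eq_zero_of_FS b fun x hx => by
    simpa using hb hx
end
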